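/- arXiv:1312.5955 — 2 statements merged into one kernel-verified Lean document; each statement's English description precedes it below -/
import Mathlib

section
/- Let n ≥ 2, let w, w' be integers, and let μ = (μ₁ ≥ ⋯ ≥ μ_n) and λ = (λ₁ ≥ ⋯ ≥ λ_{n-1}) be integer tuples satisfying the two chains of inequalities: -μ_n ≥ λ₁ ≥ -μ_{n-1} ≥ λ₂ ≥ ⋯ ≥ λ_{n-1} ≥ -μ₁ and w - μ_n ≥ λ₁ - w' ≥ w - μ_{n-1} ≥ λ₂ - w' ≥ ⋯ ≥ λ_{n-1} - w' ≥ w - μ₁. Then for all 1 ≤ i ≤ n and 1 ≤ j ≤ n-1, both of the following hold: (1+(w+w') + |2μ_i + 2λ_j + 2n - 2i - 2j + 1 - (w+w')|)/2 ≥ 1 and (1-(w+w') + |2μ_i + 2λ_j + 2n - 2i - 2j + 1 - (w+w')|)/2 ≥ 1. -/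
/-!
Put `s = w + w'` and `m = μ_i + λ_j`, so the common absolute value is `|2m + e - s|` with the odd
integer `e = 2(n - i - j) + 1`. Both claims amount to `1 + |s| ≤ |2m + e - s|`. If `i + j ≤ n`, then
`μ_i ≥ μ_{n-j}` and the lower ends of the two interlacing chains give `m ≥ max 0 s` while `e ≥ 1`;
if `i + j > n`, then `μ_i ≤ μ_{n+1-j}` and the upper ends give `m ≤ min 0 s` while `e ≤ -1`.
-/

lemma one_add_abs_le_abs_of_nonneg {m s e : ℤ} (hm : 0 ≤ m) (hs : s ≤ m) (he : 1 ≤ e) :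
    1 + |s| ≤ |2 * m + e - s| := by
  rw [abs_of_nonneg (by omega : 0 ≤ 2 * m + e - s)]
  rcases abs_cases s with ⟨h, -⟩ | ⟨h, -⟩ <;> omega

lemma one_add_abs_le_abs_of_nonpos {m s e : ℤ} (hm : m ≤ 0) (hs : m ≤ s) (he : e ≤ -1) :
    1 + |s| ≤ |2 * m + e - s| := by
  have := one_add_abs_le_abs_of_nonneg (neg_nonneg.2 hm) (neg_le_neg hs) (le_neg.1 he)
  rwa [abs_neg, show 2 * -m + -e - -s = -(2 * m + e - s) by ring, abs_neg] at this

lemma one_le_half_one_add_add_abs {s a : ℤ} (h : 1 + |s| ≤ |a|) :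
    (1 : ℚ) ≤ ((1 + s + |a| : ℤ) : ℚ) / 2 ∧ (1 : ℚ) ≤ ((1 - s + |a| : ℤ) : ℚ) / 2 := by
  have hs := le_abs_self s
  have hs' := neg_abs_le s
  constructor <;> rw [le_div_iff₀ two_pos, one_mul] <;> exact_mod_cast (by omega)

lemma antitoneOn_Icc_of_succ_le {n : ℕ} {μ : ℕ → ℤ}
    (hμ : ∀ i, 1 ≤ i → i < n → μ (i + 1) ≤ μ i) :
    AntitoneOn μ (Set.Icc 1 n) :=
  antitoneOn_of_add_one_le Set.ordConnected_Icc fun i _ hi hi' => hμ i hi.1 (by simpa using hi'.2)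

namespace Interlacing

variable {n : ℕ} {w w' : ℤ} {μ lam : ℕ → ℤ}

lemma zero_le_and_weight_le_of_add_le (hμ : AntitoneOn μ (Set.Icc 1 n))
    (hch1 : ∀ j, 1 ≤ j → j ≤ n - 1 → -μ (n + 1 - j) ≥ lam j ∧ lam j ≥ -μ (n - j))
    (hch2 : ∀ j, 1 ≤ j → j ≤ n - 1 →
      w - μ (n + 1 - j) ≥ lam j - w' ∧ lam j - w' ≥ w - μ (n - j))
    {i j : ℕ} (hi : 1 ≤ i) (hj : 1 ≤ j) (hjn : j ≤ n - 1) (hij : i + j ≤ n) :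
    0 ≤ μ i + lam j ∧ w + w' ≤ μ i + lam j := by
  have hμi : μ (n - j) ≤ μ i := hμ ⟨hi, by omega⟩ ⟨by omega, by omega⟩ (by omega)
  have := (hch1 j hj hjn).2
  have := (hch2 j hj hjn).2
  constructor <;> linarith

lemma le_zero_and_le_weight_of_lt_add (hμ : AntitoneOn μ (Set.Icc 1 n))
    (hch1 : ∀ j, 1 ≤ j → j ≤ n - 1 → -μ (n + 1 - j) ≥ lam j ∧ lam j ≥ -μ (n - j))
    (hch2 : ∀ j, 1 ≤ j → j ≤ n - 1 →
      w - μ (n + 1 - j) ≥ lam j - w' ∧ lam j - w' ≥ w - μ (n - j))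
    {i j : ℕ} (hin : i ≤ n) (hj : 1 ≤ j) (hjn : j ≤ n - 1) (hij : n < i + j) :
    μ i + lam j ≤ 0 ∧ μ i + lam j ≤ w + w' := by
  have hμi : μ i ≤ μ (n + 1 - j) := hμ ⟨by omega, by omega⟩ ⟨by omega, hin⟩ (by omega)
  have := (hch1 j hj hjn).1
  have := (hch2 j hj hjn).1
  constructor <;> linarith

end Interlacing

theorem stmt5_general (n : ℕ) (w w' : ℤ) (μ lam : ℕ → ℤ)
    (hμ : ∀ i, 1 ≤ i → i < n → μ (i + 1) ≤ μ i)
    (hch1 : ∀ j, 1 ≤ j → j ≤ n - 1 → -μ (n + 1 - j) ≥ lam j ∧ lam j ≥ -μ (n - j))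
    (hch2 : ∀ j, 1 ≤ j → j ≤ n - 1 →
      w - μ (n + 1 - j) ≥ lam j - w' ∧ lam j - w' ≥ w - μ (n - j)) :
    ∀ i j : ℕ, 1 ≤ i → i ≤ n → 1 ≤ j → j ≤ n - 1 →
      (1 : ℚ) ≤ ((1 + (w + w') +
          |2 * μ i + 2 * lam j + 2 * (n : ℤ) - 2 * (i : ℤ) - 2 * (j : ℤ) + 1 - (w + w')| : ℤ) : ℚ) / 2 ∧
      (1 : ℚ) ≤ ((1 - (w + w') +
          |2 * μ i + 2 * lam j + 2 * (n : ℤ) - 2 * (i : ℤ) - 2 * (j : ℤ) + 1 - (w + w')| : ℤ) : ℚ) / 2 := by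
  intro i j hi hin hj hjn
  have hanti := antitoneOn_Icc_of_succ_le hμ
  apply one_le_half_one_add_add_abs
  rw [show 2 * μ i + 2 * lam j + 2 * (n : ℤ) - 2 * (i : ℤ) - 2 * (j : ℤ) + 1 - (w + w') =
    2 * (μ i + lam j) + (2 * ((n : ℤ) - i - j) + 1) - (w + w') by ring]
  rcases le_or_gt (i + j) n with hij | hij
  · obtain ⟨hm, hs⟩ := Interlacing.zero_le_and_weight_le_of_add_le hanti hch1 hch2 hi hj hjn hij
    exact one_add_abs_le_abs_of_nonneg hm hs (by omega)
  · obtain ⟨hm, hs⟩ := Interlacing.le_zero_and_le_weight_of_lt_add hanti hch1 hch2 hin hj hjn hij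
    exact one_add_abs_le_abs_of_nonpos hm hs (by omega)

/-- At a complex place, if `μ^∨ ≻ λ` both at the embedding and its conjugate
(the two inequality chains below, with purity weights `w, w'`), then `s = 1/2` is
critical: every Gamma factor on both sides of the functional equation is regular,
i.e. the arguments `(1 ± (w+w') + |2μ_i + 2λ_j + 2n - 2i - 2j + 1 - (w+w')|)/2`
are `≥ 1`. -/
theorem stmt5 (n : ℕ) (hn : 2 ≤ n) (w w' : ℤ) (μ lam : ℕ → ℤ)
    (hμ : ∀ i, 1 ≤ i → i < n → μ (i + 1) ≤ μ i)
    (hlam : ∀ j, 1 ≤ j → j + 1 ≤ n - 1 → lam (j + 1) ≤ lam j)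
    (hch1 : ∀ j, 1 ≤ j → j ≤ n - 1 → -μ (n + 1 - j) ≥ lam j ∧ lam j ≥ -μ (n - j))
    (hch2 : ∀ j, 1 ≤ j → j ≤ n - 1 →
      w - μ (n + 1 - j) ≥ lam j - w' ∧ lam j - w' ≥ w - μ (n - j)) :
    ∀ i j : ℕ, 1 ≤ i → i ≤ n → 1 ≤ j → j ≤ n - 1 →
      (1 : ℚ) ≤ ((1 + (w + w') +
          |2 * μ i + 2 * lam j + 2 * (n : ℤ) - 2 * (i : ℤ) - 2 * (j : ℤ) + 1 - (w + w')| : ℤ) : ℚ) / 2 ∧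
      (1 : ℚ) ≤ ((1 - (w + w') +
          |2 * μ i + 2 * lam j + 2 * (n : ℤ) - 2 * (i : ℤ) - 2 * (j : ℤ) + 1 - (w + w')| : ℤ) : ℚ) / 2 :=
  stmt5_general n w w' μ lam hμ hch1 hch2
end

section
/- Let n ≥ 2, w, w' ∈ ℤ, and let μ = (μ₁ ≥ ⋯ ≥ μ_n), λ = (λ₁ ≥ ⋯ ≥ λ_{n-1}) satisfy the interlacing hypotheses -μ_n ≥ λ₁ ≥ -μ_{n-1} ≥ ⋯ ≥ λ_{n-1} ≥ -μ₁ and w-μ_n ≥ λ₁-w' ≥ w-μ_{n-1} ≥ ⋯ ≥ λ_{n-1}-w' ≥ w-μ₁. Define m⁺ := min over 1≤j≤n-1 of {-μ_{n+1-j}-λ_j} ∪ {μ_{n-j}+λ_j-(w+w')}, and m⁻ := max over 1≤j≤n-1 of {-μ_{n-j}-λ_j} ∪ {μ_{n+1-j}+λ_j-(w+w')}. Then m⁻ ≤ 0 ≤ m⁺, and for an integer m, the inequalities m + (1+(w+w')+|2μ_i+2λ_j+2n-2i-2j+1-(w+w')|)/2 ≥ 1 and -m + (1-(w+w')+|2μ_i+2λ_j+2n-2i-2j+1-(w+w')|)/2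 ≥ 1 hold for all 1≤i≤n, 1≤j≤n-1 if and only if m⁻ ≤ m ≤ m⁺. -/
/-!
Put `W = w + w'` and `B i j = μ i + λ j + n - i - j`. The two inequalities at `(i, j)` say
`1 + |2m + W| ≤ |2 B + 1 - W|`, i.e. `m ∈ [-B, B - W]` when `W ≤ 2B` and
`m ∈ [B + 1 - W, -B - 1]` when `2B + 2 ≤ W`. For fixed `j`, `B` is decreasing in `i`, so these
intervals grow as `i` moves away from `n - j` (first regime) or from `n + 1 - j` (second regime),
and the interlacing places the change of regime exactly between those two indices. Hence only
`i = n - j` and `i = n + 1 - j` matter, and they give the bounds defining `m⁻` and `m⁺`; both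
intervals contain `0` by interlacing.
-/

theorem antitoneOn_Icc_of_succ_le_s6 {α : Type*} [Preorder α] {f : ℕ → α} {a b : ℕ}
    (hf : ∀ i, a ≤ i → i < b → f (i + 1) ≤ f i) : AntitoneOn f (Set.Icc a b) := by
  rintro x ⟨hax, -⟩ y ⟨-, hyb⟩ hxy
  induction y, hxy using Nat.le_induction with
  | base => exact le_rfl
  | succ y hxy ih => exact (hf y (hax.trans hxy) hyb).trans (ih (Nat.le_of_succ_le hyb))

theorem rat_bounds_iff_one_add_abs_le_abs (m W A : ℤ) :
    ((1 : ℚ) ≤ (m : ℚ) + ((1 + W + |A| : ℤ) : ℚ) / 2 ∧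
      (1 : ℚ) ≤ -(m : ℚ) + ((1 - W + |A| : ℤ) : ℚ) / 2) ↔ 1 + |2 * m + W| ≤ |A| := by
  rw [← le_sub_iff_add_le', abs_le, ← @Int.cast_le ℚ, ← @Int.cast_le ℚ]
  push_cast
  constructor <;> rintro ⟨h₁, h₂⟩ <;> constructor <;> linarith

section CriticalStrip

variable {B W m : ℤ}

theorem one_add_abs_le_abs_iff_of_le (h : W ≤ 2 * B) :
    1 + |2 * m + W| ≤ |2 * B + 1 - W| ↔ -B ≤ m ∧ m ≤ B - W := by
  rw [abs_of_pos (by omega : 0 < 2 * B + 1 - W), ← le_sub_iff_add_le', abs_le]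
  omega

theorem one_add_abs_le_abs_iff_of_add_two_le (h : 2 * B + 2 ≤ W) :
    1 + |2 * m + W| ≤ |2 * B + 1 - W| ↔ B + 1 - W ≤ m ∧ m ≤ -B - 1 := by
  rw [abs_of_neg (by omega : 2 * B + 1 - W < 0), ← le_sub_iff_add_le', abs_le]
  omega

theorem forall_one_add_abs_le_abs_iff_of_antitoneOn {b : ℕ → ℤ} {n k : ℕ}
    (hb : AntitoneOn b (Set.Icc 1 n)) (hk : 1 ≤ k) (hkn : k < n)
    (hbk : W ≤ 2 * b k) (hbk' : 2 * b (k + 1) + 2 ≤ W) :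
    (∀ i, 1 ≤ i → i ≤ n → 1 + |2 * m + W| ≤ |2 * b i + 1 - W|) ↔
      (-b k ≤ m ∧ m ≤ b k - W) ∧ (b (k + 1) + 1 - W ≤ m ∧ m ≤ -b (k + 1) - 1) := by
  rw [← one_add_abs_le_abs_iff_of_le hbk, ← one_add_abs_le_abs_iff_of_add_two_le hbk']
  refine ⟨fun h => ⟨h k hk hkn.le, h (k + 1) (by omega) hkn⟩, ?_⟩
  rintro ⟨hle, hlt⟩ i hi hin
  rcases le_or_gt i k with hik | hki
  · have hbi : b k ≤ b i := hb ⟨hi, hin⟩ ⟨hk, hkn.le⟩ hik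
    rw [one_add_abs_le_abs_iff_of_le (by omega)] at hle ⊢
    omega
  · have hbi : b i ≤ b (k + 1) := hb ⟨by omega, hkn⟩ ⟨hi, hin⟩ hki
    rw [one_add_abs_le_abs_iff_of_add_two_le (by omega)] at hlt ⊢
    omega

end CriticalStrip

theorem forall_one_add_abs_le_abs_iff_of_interlace {n j : ℕ} {w w' a m : ℤ} {μ : ℕ → ℤ}
    (hμ : AntitoneOn μ (Set.Icc 1 n)) (hj : 1 ≤ j) (hjn : j ≤ n - 1)
    (h₁ : -μ (n + 1 - j) ≥ a ∧ a ≥ -μ (n - j))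
    (h₂ : w - μ (n + 1 - j) ≥ a - w' ∧ a - w' ≥ w - μ (n - j)) :
    (∀ i : ℕ, 1 ≤ i → i ≤ n → 1 + |2 * m + (w + w')| ≤
        |2 * μ i + 2 * a + 2 * (n : ℤ) - 2 * (i : ℤ) - 2 * (j : ℤ) + 1 - (w + w')|) ↔
      (max (-μ (n - j) - a) (μ (n + 1 - j) + a - (w + w')) ≤ m ∧
        m ≤ min (-μ (n + 1 - j) - a) (μ (n - j) + a - (w + w'))) := by
  have hb : AntitoneOn (fun i : ℕ => μ i + a + ((n : ℤ) - j - i)) (Set.Icc 1 n) :=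
    fun x hx y hy hxy => by
      have := hμ hx hy hxy
      dsimp only
      omega
  have hk : n - j + 1 = n + 1 - j := by omega
  simp only [show ∀ i : ℕ, 2 * μ i + 2 * a + 2 * (n : ℤ) - 2 * (i : ℤ) - 2 * (j : ℤ) + 1 -
    (w + w') = 2 * (μ i + a + ((n : ℤ) - j - i)) + 1 - (w + w') from fun i => by ring]
  rw [forall_one_add_abs_le_abs_iff_of_antitoneOn (k := n - j) hb (by omega) (by omega)
    (by omega) (by rw [hk]; omega), hk, max_le_iff, le_min_iff]
  omega

/-- Proposition `prop:crit-glnc`: at a complex place, with `μ^∨ ≻ λ` at the embedding and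
its conjugate (the two chains, with purity weights `w, w'`), set
`m⁺ = min_j { -μ_{n+1-j} - λ_j, μ_{n-j} + λ_j - (w+w') }` and
`m⁻ = max_j { -μ_{n-j} - λ_j, μ_{n+1-j} + λ_j - (w+w') }`.  Then `m⁻ ≤ 0 ≤ m⁺`, and
for `m : ℤ` the Gamma-factor regularity inequalities (criticality of `1/2 + m`) hold for
all `1 ≤ i ≤ n`, `1 ≤ j ≤ n-1` iff `m⁻ ≤ m ≤ m⁺`. -/
theorem stmt6 (n : ℕ) (hn : 2 ≤ n) (w w' : ℤ) (μ lam : ℕ → ℤ)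
    (hμ : ∀ i, 1 ≤ i → i < n → μ (i + 1) ≤ μ i)
    (hch1 : ∀ j, 1 ≤ j → j ≤ n - 1 → -μ (n + 1 - j) ≥ lam j ∧ lam j ≥ -μ (n - j))
    (hch2 : ∀ j, 1 ≤ j → j ≤ n - 1 →
      w - μ (n + 1 - j) ≥ lam j - w' ∧ lam j - w' ≥ w - μ (n - j)) :
    let mPlus : ℤ := (Finset.Icc 1 (n - 1)).inf' (Finset.nonempty_Icc.mpr (by omega))
      (fun j => min (-μ (n + 1 - j) - lam j) (μ (n - j) + lam j - (w + w')))
    let mMinus : ℤ := (Finset.Icc 1 (n - 1)).sup' (Finset.nonempty_Icc.mpr (by omega))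
      (fun j => max (-μ (n - j) - lam j) (μ (n + 1 - j) + lam j - (w + w')))
    (mMinus ≤ 0 ∧ 0 ≤ mPlus) ∧
    ∀ m : ℤ,
      (∀ i j : ℕ, 1 ≤ i → i ≤ n → 1 ≤ j → j ≤ n - 1 →
        (1 : ℚ) ≤ (m : ℚ) + ((1 + (w + w') +
            |2 * μ i + 2 * lam j + 2 * (n : ℤ) - 2 * (i : ℤ) - 2 * (j : ℤ) + 1 - (w + w')| : ℤ) : ℚ) / 2 ∧
        (1 : ℚ) ≤ -(m : ℚ) + ((1 - (w + w') +
            |2 * μ i + 2 * lam j + 2 * (n : ℤ) - 2 * (i : ℤ) - 2 * (j : ℤ) + 1 - (w + w')| : ℤ) : ℚ) / 2)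
      ↔ (mMinus ≤ m ∧ m ≤ mPlus) := by
  intro mPlus mMinus
  have column := fun j hj hjn m =>
    forall_one_add_abs_le_abs_iff_of_interlace (m := m) (antitoneOn_Icc_of_succ_le_s6 hμ) hj hjn
      (hch1 j hj hjn) (hch2 j hj hjn)
  have zero_mem : ∀ j ∈ Finset.Icc 1 (n - 1),
      max (-μ (n - j) - lam j) (μ (n + 1 - j) + lam j - (w + w')) ≤ 0 ∧
        0 ≤ min (-μ (n + 1 - j) - lam j) (μ (n - j) + lam j - (w + w')) := fun j hj => by
    obtain ⟨hj, hjn⟩ := Finset.mem_Icc.mp hj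
    have := hch1 j hj hjn
    have := hch2 j hj hjn
    rw [max_le_iff, le_min_iff]
    omega
  refine ⟨⟨Finset.sup'_le _ _ fun j hj => (zero_mem j hj).1,
    Finset.le_inf' _ _ fun j hj => (zero_mem j hj).2⟩, fun m => ?_⟩
  simp only [rat_bounds_iff_one_add_abs_le_abs]
  rw [Finset.sup'_le_iff, Finset.le_inf'_iff]
  constructor
  · intro h
    refine ⟨fun j hj => ?_, fun j hj => ?_⟩ <;> obtain ⟨hj, hjn⟩ := Finset.mem_Icc.mp hj
    · exact ((column j hj hjn m).1 fun i hi hin => h i j hi hin hj hjn).1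
    · exact ((column j hj hjn m).1 fun i hi hin => h i j hi hin hj hjn).2
  · rintro ⟨hle, hge⟩ i j hi hin hj hjn
    have hj' := Finset.mem_Icc.mpr ⟨hj, hjn⟩
    exact (column j hj hjn m).2 ⟨hle j hj', hge j hj'⟩ i hi hin
end
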